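/- arXiv:1803.02136 — 3 statements merged into one kernel-verified Lean document; each statement's English description precedes it below -/
import Mathlib

section
/- Fix a positive integer r, real constants C_{r₁,r₂,r₃} indexed by nonnegative integers with r₁+r₂+r₃ ≤ r, and for each n ≥ 2 a function h_n : {1,…,n-1} → ℝ. Define C_n(i) = n^{-r}( ∑_{r₁+r₂+r₃ ≤ r} C_{r₁,r₂,r₃} i^{r₁} (n-i)^{r₂} n^{r₃} + h_n(i) ) for 1 ≤ i ≤ n-1, and C(x) = ∑_{r₁+r₂+r₃ = r} C_{r₁,r₂,r₃} x^{r₁} (1-x)^{r₂} for x ∈ [0,1]. Then there exists a constant K (depending only on r and the constants C_{r₁,r₂,r₃}) such that for all n ≥ 2, sup_{x ∈ [0,1)} | C_n(⌊(n-1)x⌋ + 1) − C(x) | ≤ sup_{1≤i≤n-1} n^{-r}|h_n(i)| + K/n. -/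
/-!
For `i = ⌊(n-1)x⌋ + 1` one has `1 ≤ i ≤ n - 1` and `|i/n - x| ≤ 1/n`. After division by `n^r`,
a summand of `C_n(i)` of total degree `r` becomes `C_q (i/n)^{r₁} (1 - i/n)^{r₂}`, which differs
from the matching summand of `C(x)` by at most `|C_q| r/n` because `u ↦ u^{r₁} (1-u)^{r₂}` is
`(r₁ + r₂)`-Lipschitz on `[0, 1]`; a summand of lower degree is at most `|C_q|/n`. So
`K = r ∑_q |C_q|` works.
-/

open Finset

/-- The non-homogeneous ("toll") term `C_n(i)` of the finite-`n` recursion: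
`C_n(i) = n^{-r} ( ∑_{r₁+r₂+r₃ ≤ r} C_{r₁,r₂,r₃} i^{r₁} (n-i)^{r₂} n^{r₃} + h_n(i) )`. -/
noncomputable def tollCn (r : ℕ) (Cc : ℕ → ℕ → ℕ → ℝ) (h : ℕ → ℕ → ℝ) (n i : ℕ) : ℝ :=
  (n : ℝ) ^ (-(r : ℤ)) *
    ((∑ q ∈ ((range (r + 1)) ×ˢ (range (r + 1)) ×ˢ (range (r + 1))).filter
        (fun q => q.1 + q.2.1 + q.2.2 ≤ r),
        Cc q.1 q.2.1 q.2.2 * (i : ℝ) ^ q.1 * ((n : ℝ) - (i : ℝ)) ^ q.2.1 * (n : ℝ) ^ q.2.2)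
      + h n i)

/-- The limiting toll function
`C(x) = ∑_{r₁+r₂+r₃ = r} C_{r₁,r₂,r₃} x^{r₁} (1-x)^{r₂}`. -/
noncomputable def tollC (r : ℕ) (Cc : ℕ → ℕ → ℕ → ℝ) (x : ℝ) : ℝ :=
  ∑ q ∈ ((range (r + 1)) ×ˢ (range (r + 1)) ×ˢ (range (r + 1))).filter
      (fun q => q.1 + q.2.1 + q.2.2 = r),
    Cc q.1 q.2.1 q.2.2 * x ^ q.1 * (1 - x) ^ q.2.1

section UnitBall

variable {α : Type*} [CommRing α] [LinearOrder α] [IsOrderedRing α]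

lemma abs_pow_sub_pow_le_of_abs_le_one {a c : α} (ha : |a| ≤ 1) (hc : |c| ≤ 1) (p : ℕ) :
    |a ^ p - c ^ p| ≤ p * |a - c| :=
  calc |a ^ p - c ^ p| ≤ |a - c| * p * max |a| |c| ^ (p - 1) := abs_pow_sub_pow_le ..
    _ ≤ |a - c| * p * 1 := by gcongr; exact pow_le_one₀ (by positivity) (max_le ha hc)
    _ = p * |a - c| := by ring

lemma abs_pow_mul_pow_sub_le_of_abs_le_one {a b c d : α} (ha : |a| ≤ 1) (hb : |b| ≤ 1)
    (hc : |c| ≤ 1) (hd : |d| ≤ 1) (p s : ℕ) :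
    |a ^ p * b ^ s - c ^ p * d ^ s| ≤ p * |a - c| + s * |b - d| := by
  have hbs : |b ^ s| ≤ 1 := by rw [abs_pow]; exact pow_le_one₀ (abs_nonneg b) hb
  have hcp : |c ^ p| ≤ 1 := by rw [abs_pow]; exact pow_le_one₀ (abs_nonneg c) hc
  calc |a ^ p * b ^ s - c ^ p * d ^ s|
      = |(a ^ p - c ^ p) * b ^ s + c ^ p * (b ^ s - d ^ s)| := by congr 1; ring
    _ ≤ |a ^ p - c ^ p| * |b ^ s| + |c ^ p| * |b ^ s - d ^ s| := by
      rw [← abs_mul, ← abs_mul]; exact abs_add_le _ _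
    _ ≤ p * |a - c| * 1 + 1 * (s * |b - d|) :=
      add_le_add
        (mul_le_mul (abs_pow_sub_pow_le_of_abs_le_one ha hc p) hbs (abs_nonneg _) (by positivity))
        (mul_le_mul hcp (abs_pow_sub_pow_le_of_abs_le_one hb hd s) (abs_nonneg _) zero_le_one)
    _ = p * |a - c| + s * |b - d| := by ring

end UnitBall

section Monomial

variable {n y : ℝ} {p s t r : ℕ}

lemma zpow_neg_mul_monomial_of_add_eq (hn : n ≠ 0) (h : p + s + t = r) :
    n ^ (-(r : ℤ)) * (y ^ p * (n - y) ^ s * n ^ t) = (y / n) ^ p * (1 - y / n) ^ s := by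
  rw [one_sub_div hn, div_pow, div_pow, zpow_neg, zpow_natCast, ← h, pow_add, pow_add]
  field_simp

lemma abs_zpow_neg_mul_monomial_le_of_add_lt (hn : 1 ≤ n) (hy : 0 ≤ y) (hyn : y ≤ n)
    (h : p + s + t < r) :
    |n ^ (-(r : ℤ)) * (y ^ p * (n - y) ^ s * n ^ t)| ≤ 1 / n := by
  have hn0 : 0 < n := by linarith
  have hmono : y ^ p * (n - y) ^ s * n ^ t ≤ n ^ (r - 1) :=
    calc y ^ p * (n - y) ^ s * n ^ t ≤ n ^ p * n ^ s * n ^ t := by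
          gcongr; linarith
      _ = n ^ (p + s + t) := by ring
      _ ≤ n ^ (r - 1) := pow_le_pow_right₀ hn (by omega)
  have hny : 0 ≤ n - y := by linarith
  rw [abs_of_nonneg (by positivity)]
  calc n ^ (-(r : ℤ)) * (y ^ p * (n - y) ^ s * n ^ t) ≤ n ^ (-(r : ℤ)) * n ^ (r - 1) := by
        gcongr
    _ = 1 / n := by
      have hexp : -(r : ℤ) + ((r - 1 : ℕ) : ℤ) = -1 := by omega
      rw [← zpow_natCast, ← zpow_add₀ hn0.ne', hexp, zpow_neg_one, one_div]

lemma abs_toll_summand_sub_le (hn : 1 ≤ n) (hy : 0 ≤ y) (hyn : y ≤ n) {x : ℝ}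
    (hx : x ∈ Set.Icc (0 : ℝ) 1) (hyx : |y / n - x| ≤ 1 / n) (h : p + s + t ≤ r) :
    |n ^ (-(r : ℤ)) * (y ^ p * (n - y) ^ s * n ^ t) -
        if p + s + t = r then x ^ p * (1 - x) ^ s else 0| ≤ r / n := by
  have hn0 : 0 < n := by linarith
  split_ifs with heq
  · have ha0 : 0 ≤ y / n := by positivity
    have ha1 : y / n ≤ 1 := div_le_one_of_le₀ hyn hn0.le
    have ha : |y / n| ≤ 1 := by rw [abs_le]; constructor <;> linarith
    have hb : |1 - y / n| ≤ 1 := by rw [abs_le]; constructor <;> linarith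
    have hxa : |x| ≤ 1 := by rw [abs_le]; constructor <;> linarith [hx.1, hx.2]
    have hxb : |1 - x| ≤ 1 := by rw [abs_le]; constructor <;> linarith [hx.1, hx.2]
    rw [zpow_neg_mul_monomial_of_add_eq hn0.ne' heq]
    calc |(y / n) ^ p * (1 - y / n) ^ s - x ^ p * (1 - x) ^ s|
        ≤ p * |y / n - x| + s * |1 - y / n - (1 - x)| :=
          abs_pow_mul_pow_sub_le_of_abs_le_one ha hb hxa hxb p s
      _ = (p + s) * |y / n - x| := by
          rw [show 1 - y / n - (1 - x) = -(y / n - x) by ring, abs_neg]; ring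
      _ ≤ r * (1 / n) := by
          gcongr
          exact_mod_cast (by omega : p + s ≤ r)
      _ = r / n := by ring
  · rw [sub_zero]
    refine (abs_zpow_neg_mul_monomial_le_of_add_lt hn hy hyn (by omega)).trans ?_
    gcongr
    exact_mod_cast (by omega : 1 ≤ r)

end Monomial

def tollIndex (r : ℕ) : Finset (ℕ × ℕ × ℕ) :=
  ((range (r + 1)) ×ˢ (range (r + 1)) ×ˢ (range (r + 1))).filter
    (fun q => q.1 + q.2.1 + q.2.2 ≤ r)

lemma tollCn_sub_tollC (r : ℕ) (Cc : ℕ → ℕ → ℕ → ℝ) (h : ℕ → ℕ → ℝ) (n i : ℕ) (x : ℝ) :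
    tollCn r Cc h n i - tollC r Cc x =
      ∑ q ∈ tollIndex r, Cc q.1 q.2.1 q.2.2 *
        ((n : ℝ) ^ (-(r : ℤ)) * ((i : ℝ) ^ q.1 * ((n : ℝ) - i) ^ q.2.1 * (n : ℝ) ^ q.2.2) -
          if q.1 + q.2.1 + q.2.2 = r then x ^ q.1 * (1 - x) ^ q.2.1 else 0) +
      (n : ℝ) ^ (-(r : ℤ)) * h n i := by
  have hC : tollC r Cc x = ∑ q ∈ tollIndex r,
      if q.1 + q.2.1 + q.2.2 = r then Cc q.1 q.2.1 q.2.2 * x ^ q.1 * (1 - x) ^ q.2.1 else 0 := by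
    rw [tollC, tollIndex, sum_filter, sum_filter]
    refine sum_congr rfl fun q _ => ?_
    split_ifs <;> first | rfl | omega
  rw [hC, tollCn, mul_add, mul_sum, ← tollIndex, add_sub_right_comm, ← sum_sub_distrib]
  congr 1
  refine sum_congr rfl fun q _ => ?_
  split_ifs <;> ring

lemma abs_tollCn_sub_tollC_le (r : ℕ) (Cc : ℕ → ℕ → ℕ → ℝ) (h : ℕ → ℕ → ℝ) {n i : ℕ}
    (hn : 1 ≤ n) (hi : i ≤ n) {x : ℝ} (hx : x ∈ Set.Icc (0 : ℝ) 1)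
    (hix : |(i : ℝ) / n - x| ≤ 1 / n) :
    |tollCn r Cc h n i - tollC r Cc x| ≤
      (n : ℝ) ^ (-(r : ℤ)) * |h n i| + r * (∑ q ∈ tollIndex r, |Cc q.1 q.2.1 q.2.2|) / n := by
  have hn' : (1 : ℝ) ≤ n := by exact_mod_cast hn
  have hi' : (i : ℝ) ≤ n := by exact_mod_cast hi
  have hsummand : ∀ q ∈ tollIndex r, |Cc q.1 q.2.1 q.2.2 *
      ((n : ℝ) ^ (-(r : ℤ)) * ((i : ℝ) ^ q.1 * ((n : ℝ) - i) ^ q.2.1 * (n : ℝ) ^ q.2.2) -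
        if q.1 + q.2.1 + q.2.2 = r then x ^ q.1 * (1 - x) ^ q.2.1 else 0)| ≤
      |Cc q.1 q.2.1 q.2.2| * (r / n) := fun q hq => by
    rw [abs_mul]
    gcongr
    exact abs_toll_summand_sub_le hn' (Nat.cast_nonneg i) hi' hx hix (mem_filter.1 hq).2
  rw [tollCn_sub_tollC]
  calc _ ≤ ∑ q ∈ tollIndex r, |Cc q.1 q.2.1 q.2.2| * (r / n) + |(n : ℝ) ^ (-(r : ℤ)) * h n i| :=
        (abs_add_le _ _).trans <| by
          gcongr
          exact (abs_sum_le_sum_abs _ _).trans (sum_le_sum hsummand)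
    _ = _ := by
        rw [abs_mul, abs_of_nonneg (by positivity), ← sum_mul]
        ring

lemma floor_index_mem_Icc {n : ℕ} (hn : 2 ≤ n) {x : ℝ} (hx : x ∈ Set.Ico (0 : ℝ) 1) :
    ⌊((n : ℝ) - 1) * x⌋.toNat + 1 ∈ Icc 1 (n - 1) := by
  have hn1 : (0 : ℝ) < n - 1 := by
    have : (2 : ℝ) ≤ n := by exact_mod_cast hn
    linarith
  have hlt : ⌊((n : ℝ) - 1) * x⌋₊ < n - 1 := by
    rw [Nat.floor_lt (mul_nonneg hn1.le hx.1), Nat.cast_sub (by omega), Nat.cast_one]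
    exact mul_lt_of_lt_one_right hn1 hx.2
  rw [Int.floor_toNat, mem_Icc]
  omega

lemma abs_floor_index_div_sub_le {n : ℕ} (hn : 1 ≤ n) {x : ℝ} (hx : x ∈ Set.Icc (0 : ℝ) 1) :
    |((⌊((n : ℝ) - 1) * x⌋.toNat + 1 : ℕ) : ℝ) / n - x| ≤ 1 / n := by
  have hn0 : (0 : ℝ) < n := by exact_mod_cast hn
  have hy : 0 ≤ ((n : ℝ) - 1) * x :=
    mul_nonneg (sub_nonneg.2 (by exact_mod_cast hn)) hx.1
  have hlo := Nat.floor_le hy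
  have hhi := Nat.lt_floor_add_one (((n : ℝ) - 1) * x)
  rw [Int.floor_toNat, div_sub' hn0.ne', abs_div, abs_of_pos hn0]
  gcongr
  rw [abs_le]
  push_cast
  constructor <;> nlinarith [hx.1, hx.2]

/-- Lemma 2 of the paper (cf. Prop. 3.2 of Rösler 1991): uniform control of the
distance between the finite-`n` toll term and its limit. -/
theorem toll_uniform_bound (r : ℕ) (Cc : ℕ → ℕ → ℕ → ℝ) (h : ℕ → ℕ → ℝ) :
    ∃ K : ℝ, ∀ n : ℕ, ∀ hn : 2 ≤ n, ∀ x ∈ Set.Ico (0 : ℝ) 1,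
      |tollCn r Cc h n ((⌊((n : ℝ) - 1) * x⌋).toNat + 1) - tollC r Cc x| ≤
        (Finset.Icc 1 (n - 1)).sup' (Finset.nonempty_Icc.mpr (by omega))
          (fun i => (n : ℝ) ^ (-(r : ℤ)) * |h n i|) + K / n := by
  refine ⟨r * ∑ q ∈ tollIndex r, |Cc q.1 q.2.1 q.2.2|, fun n hn x hx => ?_⟩
  have hi := floor_index_mem_Icc hn hx
  have hx' := Set.Ico_subset_Icc_self hx
  refine (abs_tollCn_sub_tollC_le r Cc h (by omega) (by have := (mem_Icc.1 hi).2; omega) hx'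
    (abs_floor_index_div_sub_le (by omega) hx')).trans ?_
  gcongr
  exact le_sup' (fun i => (n : ℝ) ^ (-(r : ℤ)) * |h n i|) hi
end

section
/- For all real numbers β > 0 and R > 1, Γ(2β+2)·Γ(β+R+1) < (1/2)·Γ(β+1)·Γ(2β+R+2), i.e. (Γ(2β+2)/Γ(β+1))·(Γ(β+R+1)/Γ(2β+R+2)) < 1/2. Moreover, at R = 1 equality holds: (Γ(2β+2)/Γ(β+1))·(Γ(β+2)/Γ(2β+3)) = 1/2. -/
/-!
The functional equation `Γ (x + 1) = x Γ x` writes `log ∘ Γ` on `(0, ∞)` as the convex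
function `x ↦ log Γ (x + 1)` (Bohr–Mollerup) plus the strictly convex `-log`, so `log ∘ Γ` is
strictly convex. Hence its increments over a fixed length `d > 0` strictly increase, i.e.
`x ↦ Γ x / Γ (x + d)` is strictly decreasing. Take `d = β + 1`: at `x = β + 2` the functional
equation gives `(Γ (2β + 2) / Γ (β + 1)) · Γ x / Γ (x + d) = 1/2`, and `x = β + R + 1` lies
strictly to the right of that point.
-/

open Set

theorem StrictConvexOn.add_sub_lt_add_sub {𝕜 : Type*} [Field 𝕜] [LinearOrder 𝕜]
    [IsStrictOrderedRing 𝕜] {s : Set 𝕜} {f : 𝕜 → 𝕜} (hf : StrictConvexOn 𝕜 s f)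
    {x y d : 𝕜} (hx : x ∈ s) (hyd : y + d ∈ s) (hxy : x < y) (hd : 0 < d) :
    f (x + d) - f x < f (y + d) - f y := by
  have hleft := hf.secant_strict_mono_aux2 hx hyd (lt_add_of_pos_right x hd) (by linarith)
  have hright := hf.secant_strict_mono_aux3 hx hyd hxy (lt_add_of_pos_right y hd)
  rw [add_sub_cancel_left] at hleft hright
  exact (div_lt_div_iff_of_pos_right hd).mp (hleft.trans hright)

namespace Real

theorem strictConvexOn_log_Gamma : StrictConvexOn ℝ (Ioi 0) (log ∘ Gamma) := by
  have hshift : ConvexOn ℝ (Ioi 0) (fun x ↦ log (Gamma (x + 1))) :=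
    (convexOn_log_Gamma.translate_left 1).subset
      (fun x (hx : 0 < x) ↦ show (0 : ℝ) < 1 + x by linarith) (convex_Ioi 0)
  refine (hshift.add_strictConvexOn strictConcaveOn_log_Ioi.neg).congr fun x (hx : 0 < x) ↦ ?_
  simp only [Pi.add_apply, Pi.neg_apply, Function.comp_apply, Gamma_add_one hx.ne',
    log_mul hx.ne' (Gamma_pos_of_pos hx).ne']
  ring

theorem Gamma_div_Gamma_add_strictAntiOn {d : ℝ} (hd : 0 < d) :
    StrictAntiOn (fun x ↦ Gamma x / Gamma (x + d)) (Ioi 0) := by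
  intro x (hx : 0 < x) y (hy : 0 < y) hxy
  have hlog := strictConvexOn_log_Gamma.add_sub_lt_add_sub hx
    (show 0 < y + d by positivity) hxy hd
  simp only [Function.comp_apply] at hlog
  have hpos : ∀ z, 0 < z → 0 < Gamma z / Gamma (z + d) := fun z hz ↦
    div_pos (Gamma_pos_of_pos hz) (Gamma_pos_of_pos (by positivity))
  rw [← log_lt_log_iff (hpos y hy) (hpos x hx),
    log_div (Gamma_pos_of_pos hy).ne' (Gamma_pos_of_pos (by positivity)).ne',
    log_div (Gamma_pos_of_pos hx).ne' (Gamma_pos_of_pos (by positivity)).ne']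
  linarith

end Real

open Real

/-- The key Gamma-function estimate for the contraction condition in Aldous's
`β > 0` model: for `R > 1` the `R`-th Beta(β+1,β+1) moment bound is strictly
below `1/2`, with equality at `R = 1`. -/
theorem gamma_ratio_lt_half (β R : ℝ) (hβ : 0 < β) (hR : 1 < R) :
    Real.Gamma (2 * β + 2) * Real.Gamma (β + R + 1) <
        (1 / 2) * (Real.Gamma (β + 1) * Real.Gamma (2 * β + R + 2)) ∧
    (Real.Gamma (2 * β + 2) / Real.Gamma (β + 1)) *
        (Real.Gamma (β + R + 1) / Real.Gamma (2 * β + R + 2)) < 1 / 2 ∧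
    (Real.Gamma (2 * β + 2) / Real.Gamma (β + 1)) *
        (Real.Gamma (β + 2) / Real.Gamma (2 * β + 3)) = 1 / 2 := by
  have hdecr :
      Gamma (β + R + 1) / Gamma (2 * β + R + 2) < Gamma (β + 2) / Gamma (2 * β + 3) := by
    have := Gamma_div_Gamma_add_strictAntiOn (d := β + 1) (by positivity)
      (show (0 : ℝ) < β + 2 by positivity) (show (0 : ℝ) < β + R + 1 by positivity)
      (by linarith)
    simpa only [show β + 2 + (β + 1) = 2 * β + 3 by ring,
      show β + R + 1 + (β + 1) = 2 * β + R + 2 by ring] using this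
  have hhalf :
      Gamma (2 * β + 2) / Gamma (β + 1) * (Gamma (β + 2) / Gamma (2 * β + 3)) = 1 / 2 := by
    rw [show β + 2 = (β + 1) + 1 by ring, show 2 * β + 3 = (2 * β + 2) + 1 by ring,
      Gamma_add_one (s := β + 1) (by positivity), Gamma_add_one (s := 2 * β + 2) (by positivity)]
    have := Gamma_pos_of_pos (show 0 < β + 1 by positivity)
    have := Gamma_pos_of_pos (show 0 < 2 * β + 2 by positivity)
    field_simp
  have hratio := hhalf ▸ mul_lt_mul_of_pos_left hdecr
    (div_pos (Gamma_pos_of_pos (by positivity)) (Gamma_pos_of_pos (by positivity)))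
  refine ⟨?_, hratio, hhalf⟩
  rw [div_mul_div_comm, div_lt_iff₀ (mul_pos (Gamma_pos_of_pos (by positivity))
    (Gamma_pos_of_pos (by positivity)))] at hratio
  linarith
end

section
/- Let β > 0 and R > 1 be real numbers, let τ have the Beta(β+1,β+1) distribution, and set p_{n,i} = P((i−1)/n < τ ≤ i/n) for n ≥ 1, 1 ≤ i ≤ n. Then limsup_{n→∞} ∑_{i=1}^{n} p_{n,i} (i/n)^{R} ≤ (Γ(2β+2)/Γ(β+1))·(Γ(β+R+1)/Γ(2β+R+2)) < 1/2. In particular, for every integer r ≥ 1, for all sufficiently large n one has 2·∑_{i=1}^{n} p_{n,i} (i/n)^{2r} < 1. -/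
/-!
On the `i`-th cell `((i - 1)/n, i/n]` one has `i/n ≤ x + 1/n`, so
`∑ᵢ p_{n,i} (i/n)^R ≤ E[(τ + 1/n)^R]`, and the right side tends to
`E[τ^R] = B(β + R + 1, β + 1) / B(β + 1, β + 1)` by dominated convergence. Written with Gamma
functions this is the constant of the statement, and it is `< E[τ] = 1/2` because `x^R < x`
on `(0, 1)` when `R > 1`.
-/

open MeasureTheory

/-- The Beta function `B(x,y) = ∫₀¹ u^(x-1) (1-u)^(y-1) du`. -/
noncomputable def betaFn (x y : ℝ) : ℝ :=
  ∫ u in Set.Ioo (0 : ℝ) 1, u ^ (x - 1) * (1 - u) ^ (y - 1)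

/-- The `Beta(β+1, β+1)` probability measure on `ℝ`, with density
`x^β (1-x)^β / B(β+1, β+1)` on `(0,1)`. -/
noncomputable def betaMeasure (β : ℝ) : Measure ℝ :=
  (volume.restrict (Set.Ioo (0 : ℝ) 1)).withDensity
    (fun x => ENNReal.ofReal (x ^ β * (1 - x) ^ β / betaFn (β + 1) (β + 1)))

open Set Filter Topology

lemma integral_rpow_lt_integral_id {μ : Measure ℝ} [IsFiniteMeasure μ] [NeZero μ]
    (hμ : ∀ᵐ x ∂μ, x ∈ Ioo (0 : ℝ) 1) {R : ℝ} (hR : 1 < R) :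
    ∫ x, x ^ R ∂μ < ∫ x, x ∂μ := by
  have hbound : ∀ f : ℝ → ℝ, Measurable f → (∀ x ∈ Ioo (0 : ℝ) 1, ‖f x‖ ≤ 1) →
      Integrable f μ := fun f hf hf1 =>
    .of_bound hf.aestronglyMeasurable 1 (hμ.mono hf1)
  have hpow : Integrable (fun x : ℝ => x ^ R) μ := hbound _ (by fun_prop) fun x hx => by
    rw [Real.norm_eq_abs, abs_of_nonneg (Real.rpow_nonneg hx.1.le R)]
    exact Real.rpow_le_one hx.1.le hx.2.le (by linarith)
  have hid : Integrable (fun x : ℝ => x) μ := hbound _ measurable_id fun x hx => by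
    rw [Real.norm_eq_abs, abs_of_pos hx.1]
    exact hx.2.le
  have hlt : ∀ᵐ x ∂μ, 0 < x - x ^ R := hμ.mono fun x hx => by
    have := Real.rpow_lt_rpow_of_exponent_gt hx.1 hx.2 hR
    rw [Real.rpow_one] at this
    linarith
  rw [← sub_pos, ← integral_sub hid hpow,
    integral_pos_iff_support_of_nonneg_ae (hlt.mono fun _ h => h.le) (hid.sub hpow)]
  refine pos_iff_ne_zero.2 fun h0 => ?_
  obtain ⟨x, hx, hx0⟩ := (hlt.and (measure_eq_zero_iff_ae_notMem.1 h0)).exists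
  exact hx0 hx.ne'

/-- `∑ᵢ p_{n,i} (i/n)^R` with `p_{n,i} = μ((i-1)/n, i/n]`: the `R`-th moment of `⌈nτ⌉/n` for
`τ ∼ μ` when `μ` lives on `(0, 1]`. -/
noncomputable def discretizedMoment (μ : Measure ℝ) (R : ℝ) (n : ℕ) : ℝ :=
  ∑ i ∈ Finset.Icc 1 n, (μ (Ioc (((i : ℝ) - 1) / n) ((i : ℝ) / n))).toReal * ((i : ℝ) / n) ^ R

lemma pairwise_disjoint_Ioc_div (n : ℕ) :
    Pairwise (Function.onFun Disjoint fun i : ℕ => Ioc (((i : ℝ) - 1) / n) ((i : ℝ) / n)) := by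
  have hf : Monotone fun k : ℤ => (k : ℝ) / n := fun a b hab => by dsimp only; gcongr
  have := hf.pairwise_disjoint_on_Ioc_pred.comp_of_injective Nat.cast_injective
  simp only [Order.pred_eq_sub_one, Int.cast_sub, Int.cast_one] at this
  exact this

section DiscretizedMoment

variable {μ : Measure ℝ} [IsFiniteMeasure μ] {R : ℝ}

lemma integrable_rpow_add (hμ : ∀ᵐ x ∂μ, x ∈ Ioc (0 : ℝ) 1) (hR : 0 ≤ R) {c : ℝ} (hc : 0 ≤ c) :
    Integrable (fun x => (x + c) ^ R) μ :=
  .of_bound (by fun_prop) ((1 + c) ^ R) <| hμ.mono fun x hx => by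
    rw [Real.norm_eq_abs, abs_of_nonneg (Real.rpow_nonneg (by linarith [hx.1]) R)]
    exact Real.rpow_le_rpow (by linarith [hx.1]) (by linarith [hx.2]) hR

lemma discretizedMoment_le_integral (hμ : ∀ᵐ x ∂μ, x ∈ Ioc (0 : ℝ) 1) (hR : 0 ≤ R) (n : ℕ) :
    discretizedMoment μ R n ≤ ∫ x, (x + 1 / n) ^ R ∂μ := by
  set I : ℕ → Set ℝ := fun i => Ioc (((i : ℝ) - 1) / n) ((i : ℝ) / n)
  have hint := integrable_rpow_add hμ hR (c := 1 / n) (by positivity)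
  calc discretizedMoment μ R n = ∑ i ∈ Finset.Icc 1 n, ∫ _ in I i, ((i : ℝ) / n) ^ R ∂μ := by
        simp only [discretizedMoment, setIntegral_const, smul_eq_mul, Measure.real, I]
    _ ≤ ∑ i ∈ Finset.Icc 1 n, ∫ x in I i, (x + 1 / n) ^ R ∂μ := by
        refine Finset.sum_le_sum fun i _ => setIntegral_mono_on (integrableOn_const ..)
          hint.integrableOn measurableSet_Ioc fun x hx => ?_
        have : (i : ℝ) / n ≤ x + 1 / n := by linarith [hx.1, sub_div (i : ℝ) 1 n]
        exact Real.rpow_le_rpow (by positivity) this hR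
    _ = ∫ x in ⋃ i ∈ Finset.Icc 1 n, I i, (x + 1 / n) ^ R ∂μ :=
        (integral_biUnion_finset _ (fun _ _ => measurableSet_Ioc)
          ((pairwise_disjoint_Ioc_div n).set_pairwise _) fun _ _ => hint.integrableOn).symm
    _ ≤ ∫ x, (x + 1 / n) ^ R ∂μ :=
        setIntegral_le_integral hint <| hμ.mono fun x hx =>
          Real.rpow_nonneg (by have := hx.1; positivity) R

lemma tendsto_integral_rpow_add_inv (hμ : ∀ᵐ x ∂μ, x ∈ Ioc (0 : ℝ) 1) (hR : 0 ≤ R) :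
    Tendsto (fun n : ℕ => ∫ x, (x + 1 / n) ^ R ∂μ) atTop (𝓝 (∫ x, x ^ R ∂μ)) := by
  refine tendsto_integral_of_dominated_convergence (fun _ => 2 ^ R)
    (fun n => (integrable_rpow_add hμ hR (by positivity)).aestronglyMeasurable)
    (integrable_const _) (fun n => ?_) (hμ.mono fun x hx => ?_)
  · filter_upwards [hμ] with x hx
    have h1n : 1 / (n : ℝ) ≤ 1 := by
      rcases n.eq_zero_or_pos with rfl | hn
      · simp
      · exact div_le_one_of_le₀ (by exact_mod_cast hn) (Nat.cast_nonneg n)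
    have hx0 : 0 ≤ x + 1 / n := by have := hx.1; positivity
    rw [Real.norm_eq_abs, abs_of_nonneg (Real.rpow_nonneg hx0 R)]
    exact Real.rpow_le_rpow hx0 (by linarith [hx.2]) hR
  · have : Tendsto (fun n : ℕ => x + 1 / (n : ℝ)) atTop (𝓝 x) := by
      simpa using tendsto_const_nhds.add (tendsto_one_div_atTop_nhds_zero_nat (𝕜 := ℝ))
    exact this.rpow_const (Or.inl hx.1.ne')

lemma limsup_discretizedMoment_le (hμ : ∀ᵐ x ∂μ, x ∈ Ioc (0 : ℝ) 1) (hR : 0 ≤ R) :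
    limsup (discretizedMoment μ R) atTop ≤ ∫ x, x ^ R ∂μ := by
  have hT := tendsto_integral_rpow_add_inv hμ hR
  have hnonneg (n : ℕ) : 0 ≤ discretizedMoment μ R n :=
    Finset.sum_nonneg fun i _ => by positivity
  rw [← hT.limsup_eq]
  exact limsup_le_limsup (.of_forall (discretizedMoment_le_integral hμ hR))
    (isCoboundedUnder_le_of_le atTop hnonneg) hT.isBoundedUnder_le

lemma eventually_discretizedMoment_lt (hμ : ∀ᵐ x ∂μ, x ∈ Ioc (0 : ℝ) 1) (hR : 0 ≤ R) {c : ℝ}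
    (hc : ∫ x, x ^ R ∂μ < c) : ∀ᶠ n in atTop, discretizedMoment μ R n < c :=
  ((tendsto_integral_rpow_add_inv hμ hR).eventually_lt_const hc).mono fun n hn =>
    (discretizedMoment_le_integral hμ hR n).trans_lt hn

end DiscretizedMoment

lemma betaFn_eq_Gamma {x y : ℝ} (hx : 0 < x) (hy : 0 < y) :
    betaFn x y = Real.Gamma x * Real.Gamma y / Real.Gamma (x + y) := by
  have h_ofReal : Complex.betaIntegral x y = betaFn x y := by
    rw [Complex.betaIntegral, intervalIntegral.integral_of_le zero_le_one,
      integral_Ioc_eq_integral_Ioo, betaFn]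
    refine (setIntegral_congr_fun (g := fun u => ((u ^ (x - 1) * (1 - u) ^ (y - 1) : ℝ) : ℂ))
      measurableSet_Ioo fun u hu => ?_).trans integral_ofReal
    beta_reduce
    rw [Complex.ofReal_mul, Complex.ofReal_cpow hu.1.le,
      Complex.ofReal_cpow (sub_nonneg.2 hu.2.le)]
    push_cast
    ring
  have h := Complex.Gamma_mul_Gamma_eq_betaIntegral (s := x) (t := y)
    (by simpa using hx) (by simpa using hy)
  rw [h_ofReal, ← Complex.ofReal_add, Complex.Gamma_ofReal, Complex.Gamma_ofReal,
    Complex.Gamma_ofReal] at h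
  have h' : Real.Gamma x * Real.Gamma y = Real.Gamma (x + y) * betaFn x y := by
    exact_mod_cast h
  rw [h', mul_div_cancel_left₀ _ (Real.Gamma_pos_of_pos (add_pos hx hy)).ne']

lemma betaFn_pos {x y : ℝ} (hx : 0 < x) (hy : 0 < y) : 0 < betaFn x y := by
  rw [betaFn_eq_Gamma hx hy]
  have := Real.Gamma_pos_of_pos hx
  have := Real.Gamma_pos_of_pos hy
  have := Real.Gamma_pos_of_pos (add_pos hx hy)
  positivity

lemma integral_betaMeasure {β : ℝ} (hβ : -1 < β) (f : ℝ → ℝ) :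
    ∫ x, f x ∂betaMeasure β =
      ∫ x in Ioo 0 1, x ^ β * (1 - x) ^ β / betaFn (β + 1) (β + 1) * f x := by
  have hB := betaFn_pos (x := β + 1) (y := β + 1) (by linarith) (by linarith)
  rw [betaMeasure, integral_withDensity_eq_integral_toReal_smul (by fun_prop)
    (ae_of_all _ fun _ => ENNReal.ofReal_lt_top)]
  refine setIntegral_congr_fun measurableSet_Ioo fun x hx => ?_
  have : 0 ≤ x ^ β * (1 - x) ^ β / betaFn (β + 1) (β + 1) := by
    have := Real.rpow_nonneg hx.1.le β
    have := Real.rpow_nonneg (sub_nonneg.2 hx.2.le) β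
    positivity
  rw [ENNReal.toReal_ofReal this, smul_eq_mul]

lemma isProbabilityMeasure_betaMeasure {β : ℝ} (hβ : -1 < β) :
    IsProbabilityMeasure (betaMeasure β) := by
  have hB := betaFn_pos (x := β + 1) (y := β + 1) (by linarith) (by linarith)
  have hint : ∫ x in Ioo 0 1, x ^ β * (1 - x) ^ β = betaFn (β + 1) (β + 1) := by
    simp only [betaFn, add_sub_cancel_right]
  have h := integral_betaMeasure hβ 1
  simp only [Pi.one_apply, mul_one, integral_const, smul_eq_mul, integral_div, hint,
    div_self hB.ne'] at h
  exact ⟨(ENNReal.toReal_eq_one_iff _).1 h⟩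

lemma ae_mem_Ioo_betaMeasure (β : ℝ) : ∀ᵐ x ∂betaMeasure β, x ∈ Ioo (0 : ℝ) 1 :=
  (withDensity_absolutelyContinuous _ _).ae_le (ae_restrict_mem measurableSet_Ioo)

lemma integral_rpow_betaMeasure {β R : ℝ} (hβ : -1 < β) (hR : -1 < β + R) :
    ∫ x, x ^ R ∂betaMeasure β =
      Real.Gamma (2 * β + 2) / Real.Gamma (β + 1) *
        (Real.Gamma (β + R + 1) / Real.Gamma (2 * β + R + 2)) := by
  have hint : ∫ x in Ioo 0 1, x ^ β * (1 - x) ^ β * x ^ R = betaFn (β + R + 1) (β + 1) := by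
    refine setIntegral_congr_fun measurableSet_Ioo fun x hx => ?_
    simp only [add_sub_cancel_right, Real.rpow_add hx.1]
    ring
  simp only [integral_betaMeasure hβ, div_mul_eq_mul_div, integral_div, hint,
    betaFn_eq_Gamma (show 0 < β + R + 1 by linarith) (show 0 < β + 1 by linarith),
    betaFn_eq_Gamma (show 0 < β + 1 by linarith) (show 0 < β + 1 by linarith)]
  have := Real.Gamma_pos_of_pos (show 0 < β + 1 by linarith)
  have := Real.Gamma_pos_of_pos (show 0 < β + R + 1 + (β + 1) by linarith)
  have := Real.Gamma_pos_of_pos (show 0 < β + 1 + (β + 1) by linarith)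
  rw [show β + R + 1 + (β + 1) = 2 * β + R + 2 by ring, show β + 1 + (β + 1) = 2 * β + 2 by ring]
  field_simp

lemma integral_id_betaMeasure {β : ℝ} (hβ : -1 < β) : ∫ x, x ∂betaMeasure β = 1 / 2 := by
  have h := integral_rpow_betaMeasure (R := 1) hβ (by linarith)
  simp only [Real.rpow_one] at h
  rw [h, show 2 * β + 1 + 2 = (2 * β + 2) + 1 by ring,
    Real.Gamma_add_one (s := 2 * β + 2) (by linarith),
    Real.Gamma_add_one (s := β + 1) (by linarith)]
  have ha := (Real.Gamma_pos_of_pos (show 0 < 2 * β + 2 by linarith)).ne'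
  have hb := (Real.Gamma_pos_of_pos (show 0 < β + 1 by linarith)).ne'
  generalize Real.Gamma (2 * β + 2) = a at ha ⊢
  generalize Real.Gamma (β + 1) = b at hb ⊢
  have : β + 1 ≠ 0 := by linarith
  field_simp

/-- With `p_{n,i} = P((i−1)/n < τ ≤ i/n)` for `τ ~ Beta(β+1,β+1)`, `β > 0`:
`limsup_n ∑_{i=1}^n p_{n,i}(i/n)^R ≤ (Γ(2β+2)/Γ(β+1))(Γ(β+R+1)/Γ(2β+R+2)) < 1/2`
for `R > 1`; in particular the contraction condition
`2 ∑ p_{n,i} (i/n)^{2r} < 1` holds for all large `n`. -/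
theorem beta_contraction_condition (β R : ℝ) (hβ : 0 < β) (hR : 1 < R) :
    Filter.limsup
        (fun n : ℕ => ∑ i ∈ Finset.Icc 1 n,
          (betaMeasure β (Set.Ioc (((i : ℝ) - 1) / n) ((i : ℝ) / n))).toReal *
            ((i : ℝ) / n) ^ R)
        Filter.atTop
      ≤ (Real.Gamma (2 * β + 2) / Real.Gamma (β + 1)) *
          (Real.Gamma (β + R + 1) / Real.Gamma (2 * β + R + 2)) ∧
    (Real.Gamma (2 * β + 2) / Real.Gamma (β + 1)) *
        (Real.Gamma (β + R + 1) / Real.Gamma (2 * β + R + 2)) < 1 / 2 ∧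
    ∀ r : ℕ, 1 ≤ r → ∀ᶠ n : ℕ in Filter.atTop,
      2 * ∑ i ∈ Finset.Icc 1 n,
          (betaMeasure β (Set.Ioc (((i : ℝ) - 1) / n) ((i : ℝ) / n))).toReal *
            ((i : ℝ) / n) ^ (((2 * r : ℕ) : ℝ)) < 1 := by
  have hβ' : -1 < β := by linarith
  have := isProbabilityMeasure_betaMeasure hβ'
  have hμ : ∀ᵐ x ∂betaMeasure β, x ∈ Ioc (0 : ℝ) 1 :=
    (ae_mem_Ioo_betaMeasure β).mono fun _ hx => Ioo_subset_Ioc_self hx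
  have hlt {R : ℝ} (hR : 1 < R) : ∫ x, x ^ R ∂betaMeasure β < 1 / 2 :=
    integral_id_betaMeasure hβ' ▸ integral_rpow_lt_integral_id (ae_mem_Ioo_betaMeasure β) hR
  rw [← integral_rpow_betaMeasure hβ' (by linarith)]
  refine ⟨limsup_discretizedMoment_le hμ (by linarith), hlt hR, fun r hr => ?_⟩
  have h2r : 1 < ((2 * r : ℕ) : ℝ) := by norm_cast; omega
  filter_upwards [eventually_discretizedMoment_lt hμ (by linarith) (hlt h2r)] with n hn
  exact (by linarith : 2 * discretizedMoment (betaMeasure β) _ n < 1)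
end
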